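/- arXiv:2302.11530 — 7 statements merged into one kernel-verified Lean document; each statement's English description precedes it below -/
import Mathlib

section
/- If f : 2^[m] → ℝ≥0 is a binary supermodular function with f(∅) = 0 and f(S) > 0 for some subset S, then there exists an element a ∈ S such that f(S \ {a}) = f(S) - 1. -/
/-- If `f` is binary supermodular with `f ∅ = 0` and `f S > 0`,
then some element `a ∈ S` has `f (S \ {a}) = f S - 1`. -/
theorem binary_supermodular_exists_decreasing_element (m : ℕ) (f : Finset (Fin m) → ℝ)
    (hnn : ∀ S : Finset (Fin m), 0 ≤ f S)
    (hmarg : ∀ (S : Finset (Fin m)) (a : Fin m), a ∉ S →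
      f (insert a S) - f S = 0 ∨ f (insert a S) - f S = 1)
    (hsuper : ∀ (S T : Finset (Fin m)) (a : Fin m), S ⊆ T → a ∉ T →
      f (insert a S) - f S ≤ f (insert a T) - f T)
    (h0 : f ∅ = 0)
    (S : Finset (Fin m)) (hS : 0 < f S) :
    ∃ a ∈ S, f (S.erase a) = f S - 1 := by
  revert hS
  induction S using Finset.strongInduction with
  | _ S ih =>
    intro hS
    obtain ⟨a, ha⟩ : S.Nonempty := by
      rcases S.eq_empty_or_nonempty with h | h
      · rw [h, h0] at hS; linarith
      · exact h
    have hins : insert a (S.erase a) = S := Finset.insert_erase ha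
    rcases hmarg (S.erase a) a (Finset.notMem_erase a S) with h | h
    · rw [hins] at h
      have hS' : 0 < f (S.erase a) := by linarith
      obtain ⟨b, hb, hfb⟩ := ih (S.erase a) (Finset.erase_ssubset ha) hS'
      have hbS : b ∈ S := Finset.mem_of_mem_erase hb
      refine ⟨b, hbS, ?_⟩
      have hsub : (S.erase a).erase b ⊆ S.erase b :=
        Finset.erase_subset_erase _ (Finset.erase_subset _ _)
      have hb' : b ∉ S.erase b := Finset.notMem_erase _ _
      have hsup := hsuper _ _ b hsub hb'
      rw [Finset.insert_erase hb, Finset.insert_erase hbS] at hsup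
      rcases hmarg (S.erase b) b hb' with h2 | h2 <;>
        rw [Finset.insert_erase hbS] at h2 <;> linarith
    · rw [hins] at h
      exact ⟨a, ha, by linarith⟩
end

section
/- Let M_1, ..., M_n be matroids on a common ground set [m] with rank functions r_1, ..., r_n. Then max over all partitions (A_1,...,A_n) of [m] of the sum ∑_i r_i(A_i) equals the rank of [m] in the union matroid M_1 ∨ ... ∨ M_n. -/
/-- `A` is a partition of the ground set `Fin m` into `n` (possibly empty) parts. -/
def IsPartition {n m : ℕ} (A : Fin n → Finset (Fin m)) : Prop :=
  (∀ i j : Fin n, i ≠ j → Disjoint (A i) (A j)) ∧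
    Finset.univ.biUnion A = (Finset.univ : Finset (Fin m))

/-- `r` is a matroid rank function: normalized, binary marginals, submodular. -/
def IsMatroidRank {m : ℕ} (r : Finset (Fin m) → ℕ) : Prop :=
  r ∅ = 0 ∧
  (∀ (S : Finset (Fin m)) (a : Fin m), a ∉ S →
    r (insert a S) = r S ∨ r (insert a S) = r S + 1) ∧
  (∀ (S T : Finset (Fin m)) (a : Fin m), S ⊆ T → a ∉ T →
    r (insert a T) + r S ≤ r (insert a S) + r T)

/-- `T` is independent in the union matroid of the matroids with rank functions `r i`:
it is a union of sets, each independent (`r i (I i) = |I i|`) in the respective matroid. -/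
def UnionIndep {n m : ℕ} (r : Fin n → Finset (Fin m) → ℕ) (T : Finset (Fin m)) : Prop :=
  ∃ I : Fin n → Finset (Fin m), (∀ i, r i (I i) = (I i).card) ∧ T = Finset.univ.biUnion I

lemma MR_rank_le_union {m : ℕ} {r : Finset (Fin m) → ℕ} (hr : IsMatroidRank r)
    (S D : Finset (Fin m)) : r S ≤ r (S ∪ D) := by
  induction D using Finset.induction_on with
  | empty => simp
  | @insert a D _ ih =>
    rw [Finset.union_insert]
    by_cases ha : a ∈ S ∪ D
    · rwa [Finset.insert_eq_self.2 ha]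
    · rcases hr.2.1 (S ∪ D) a ha with h' | h' <;> omega

lemma MR_rank_mono {m : ℕ} {r : Finset (Fin m) → ℕ} (hr : IsMatroidRank r)
    {S T : Finset (Fin m)} (h : S ⊆ T) : r S ≤ r T := by
  have := MR_rank_le_union hr S (T \ S)
  rwa [Finset.union_sdiff_of_subset h] at this

lemma MR_rank_union_le {m : ℕ} {r : Finset (Fin m) → ℕ} (hr : IsMatroidRank r)
    (S D : Finset (Fin m)) : r (S ∪ D) ≤ r S + D.card := by
  induction D using Finset.induction_on with
  | empty => simp
  | @insert a D ha ih =>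
    rw [Finset.union_insert, Finset.card_insert_of_notMem ha]
    by_cases hb : a ∈ S ∪ D
    · rw [Finset.insert_eq_self.2 hb]; omega
    · rcases hr.2.1 (S ∪ D) a hb with h' | h' <;> omega

lemma MR_rank_le_card {m : ℕ} {r : Finset (Fin m) → ℕ} (hr : IsMatroidRank r)
    (S : Finset (Fin m)) : r S ≤ S.card := by
  have := MR_rank_union_le hr ∅ S
  simpa [hr.1] using this

lemma MR_indep_subset {m : ℕ} {r : Finset (Fin m) → ℕ} (hr : IsMatroidRank r)
    {S T : Finset (Fin m)} (hST : S ⊆ T) (hT : r T = T.card) : r S = S.card := by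
  have h1 : r (S ∪ (T \ S)) ≤ r S + (T \ S).card := MR_rank_union_le hr S (T \ S)
  rw [Finset.union_sdiff_of_subset hST] at h1
  have h2 : (T \ S).card = T.card - S.card := Finset.card_sdiff_of_subset hST
  have h3 : S.card ≤ T.card := Finset.card_le_card hST
  have h4 : r S ≤ S.card := MR_rank_le_card hr S
  omega

lemma MR_exists_basis {m : ℕ} {r : Finset (Fin m) → ℕ} (hr : IsMatroidRank r)
    (A : Finset (Fin m)) : ∃ B ⊆ A, r B = B.card ∧ B.card = r A := by
  induction A using Finset.induction_on with
  | empty => exact ⟨∅, by simp [hr.1]⟩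
  | @insert a A ha ih =>
    obtain ⟨B, hBA, hBi, hBr⟩ := ih
    rcases hr.2.1 A a ha with h' | h'
    · exact ⟨B, hBA.trans (Finset.subset_insert a A), hBi, by omega⟩
    · have haB : a ∉ B := fun hc => ha (hBA hc)
      have hsub := hr.2.2 B A a hBA ha
      have hcard : (insert a B).card = B.card + 1 := Finset.card_insert_of_notMem haB
      have h5 : r (insert a B) ≤ B.card + 1 := by
        have := MR_rank_le_card hr (insert a B); omega
      refine ⟨insert a B, Finset.insert_subset_insert a hBA, ?_, ?_⟩ <;> omega

/-- matroid union theorem, optimization form: the maximum of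
`∑ i, r i (A i)` over all partitions `(A 1, …, A n)` of the ground set equals the rank of
the ground set in the union matroid, i.e. the maximum cardinality of a set independent in
the union matroid. -/
theorem max_partition_rank_sum_eq_union_rank (n m : ℕ) (hn : 1 ≤ n)
    (r : Fin n → Finset (Fin m) → ℕ) (hr : ∀ i, IsMatroidRank (r i))
    (ur : ℕ)
    (hur : IsGreatest {s : ℕ | ∃ T : Finset (Fin m), UnionIndep r T ∧ s = T.card} ur) :
    IsGreatest {s : ℕ | ∃ A : Fin n → Finset (Fin m), IsPartition A ∧ s = ∑ i, r i (A i)} ur := by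
  -- Upper bound part
  have hub : ∀ s ∈ {s : ℕ | ∃ A : Fin n → Finset (Fin m),
      IsPartition A ∧ s = ∑ i, r i (A i)}, s ≤ ur := by
    rintro s ⟨A, ⟨hdisj, -⟩, rfl⟩
    choose B hBA hBi hBr using fun i => MR_exists_basis (hr i) (A i)
    have hBdisj : ∀ i j : Fin n, i ≠ j → Disjoint (B i) (B j) := fun i j hij =>
      ((hdisj i j hij).mono (hBA i) (hBA j))
    have hcard : (Finset.univ.biUnion B).card = ∑ i, (B i).card :=
      Finset.card_biUnion (fun i _ j _ hij => hBdisj i j hij)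
    apply hur.2
    refine ⟨Finset.univ.biUnion B, ⟨B, hBi, rfl⟩, ?_⟩
    rw [hcard]
    exact Finset.sum_congr rfl fun i _ => (hBr i).symm
  constructor
  · -- membership
    obtain ⟨T, ⟨I, hIi, hTI⟩, hurT⟩ := hur.1
    set J : Fin n → Finset (Fin m) :=
      fun i => I i \ (Finset.univ.filter (fun j => j < i)).biUnion I with hJ
    have hJI : ∀ i, J i ⊆ I i := fun i => Finset.sdiff_subset
    have hJdisj : ∀ i j : Fin n, i ≠ j → Disjoint (J i) (J j) := by
      have key : ∀ i j : Fin n, i < j → Disjoint (J i) (J j) := by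
        intro i j hij
        rw [Finset.disjoint_left]
        intro x hxi hxj
        have hxIi : x ∈ I i := hJI i hxi
        have : x ∈ (Finset.univ.filter (fun k => k < j)).biUnion I :=
          Finset.mem_biUnion.2 ⟨i, by simp [hij], hxIi⟩
        exact (Finset.mem_sdiff.1 hxj).2 this
      intro i j hij
      rcases lt_or_gt_of_ne hij with h | h
      · exact key i j h
      · exact (key j i h).symm
    have hJU : Finset.univ.biUnion J = Finset.univ.biUnion I := by
      apply Finset.Subset.antisymm
      · exact Finset.biUnion_subset_biUnion_of_subset_left _ (by intro i _; exact Finset.mem_univ i) |>.trans (le_refl _) |>.trans (by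
          intro x hx
          obtain ⟨i, -, hxi⟩ := Finset.mem_biUnion.1 hx
          exact Finset.mem_biUnion.2 ⟨i, Finset.mem_univ i, hJI i hxi⟩)
      · intro x hx
        obtain ⟨i, -, hxi⟩ := Finset.mem_biUnion.1 hx
        have hS : (Finset.univ.filter (fun j => x ∈ I j)).Nonempty := ⟨i, by simp [hxi]⟩
        set j := (Finset.univ.filter (fun j => x ∈ I j)).min' hS with hj
        have hxj : x ∈ I j := by
          have := (Finset.univ.filter (fun j => x ∈ I j)).min'_mem hS
          simpa using this
        refine Finset.mem_biUnion.2 ⟨j, Finset.mem_univ j, ?_⟩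
        rw [hJ, Finset.mem_sdiff]
        refine ⟨hxj, fun hc => ?_⟩
        obtain ⟨k, hk, hxk⟩ := Finset.mem_biUnion.1 hc
        have hkj : k < j := by simpa using hk
        have : j ≤ k := Finset.min'_le _ k (by simp [hxk])
        exact absurd this (not_le.2 hkj)
    have hJT : ∀ i, J i ⊆ T := by
      intro i x hx
      rw [hTI]
      exact Finset.mem_biUnion.2 ⟨i, Finset.mem_univ i, hJI i hx⟩
    set i0 : Fin n := ⟨0, hn⟩ with hi0
    set A : Fin n → Finset (Fin m) :=
      fun i => if i = i0 then J i ∪ (Finset.univ \ T) else J i with hA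
    have hJA : ∀ i, J i ⊆ A i := by
      intro i
      rw [hA]
      by_cases h : i = i0 <;> simp [h, Finset.subset_union_left]
    have hpart : IsPartition A := by
      constructor
      · intro i j hij
        have hd := hJdisj i j hij
        have hcompl : ∀ k, Disjoint (Finset.univ \ T) (J k) := by
          intro k
          rw [Finset.disjoint_left]
          intro x hx hxk
          exact (Finset.mem_sdiff.1 hx).2 (hJT k hxk)
        rw [hA]
        by_cases h1 : i = i0 <;> by_cases h2 : j = i0
        · exact absurd (h1.trans h2.symm) hij
        · simp only [h1, if_pos rfl, if_neg h2]
          exact Finset.disjoint_union_left.2 ⟨h1 ▸ hd, hcompl j⟩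
        · simp only [h2, if_pos rfl, if_neg h1]
          exact Finset.disjoint_union_right.2 ⟨h2 ▸ hd, (hcompl i).symm⟩
        · simp only [if_neg h1, if_neg h2]; exact hd
      · apply Finset.eq_univ_of_forall
        intro x
        by_cases hxT : x ∈ T
        · have : x ∈ Finset.univ.biUnion J := by rw [hJU, ← hTI]; exact hxT
          obtain ⟨j, -, hxj⟩ := Finset.mem_biUnion.1 this
          exact Finset.mem_biUnion.2 ⟨j, Finset.mem_univ j, hJA j hxj⟩
        · refine Finset.mem_biUnion.2 ⟨i0, Finset.mem_univ i0, ?_⟩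
          rw [hA]
          simp [hxT]
    have hsum_ge : ur ≤ ∑ i, r i (A i) := by
      have h1 : ∀ i, (J i).card = r i (J i) :=
        fun i => (MR_indep_subset (hr i) (hJI i) (hIi i)).symm
      have h2 : ∀ i, r i (J i) ≤ r i (A i) :=
        fun i => MR_rank_mono (hr i) (hJA i)
      have h3 : (Finset.univ.biUnion J).card = ∑ i, (J i).card :=
        Finset.card_biUnion (fun i _ j _ hij => hJdisj i j hij)
      have h4 : (Finset.univ.biUnion J).card = T.card := by rw [hJU, ← hTI]
      calc ur = T.card := hurT
        _ = ∑ i, (J i).card := by rw [← h4, h3]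
        _ ≤ ∑ i, r i (A i) := Finset.sum_le_sum fun i _ => by rw [h1 i]; exact h2 i
    have hsum_le : ∑ i, r i (A i) ≤ ur := hub _ ⟨A, hpart, rfl⟩
    exact ⟨A, hpart, le_antisymm hsum_ge hsum_le⟩
  · exact hub
end

section
/- Under binary supermodular cost functions with c_i(∅)=0, there always exists a complete allocation that is simultaneously EF1 and social-cost minimizing (hence Pareto efficient). -/
/-- Binary marginals for a nonnegative-integer-valued cost function. -/
def BinaryMarginals {m : ℕ} (c : Finset (Fin m) → ℕ) : Prop :=
  ∀ (S : Finset (Fin m)) (a : Fin m), a ∉ S →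
    c (insert a S) = c S ∨ c (insert a S) = c S + 1

/-- Supermodularity (increasing marginals), in addition form. -/
def Supermod {m : ℕ} (c : Finset (Fin m) → ℕ) : Prop :=
  ∀ (S T : Finset (Fin m)) (a : Fin m), S ⊆ T → a ∉ T →
    c (insert a S) + c T ≤ c (insert a T) + c S

/-- An allocation of chores is EF1: each agent's envy vanishes on removal of some chore
from her own bundle. -/
def EF1 {n m : ℕ} (c : Fin n → Finset (Fin m) → ℕ) (A : Fin n → Finset (Fin m)) : Prop :=
  ∀ i j : Fin n, A i ≠ ∅ → ∃ t ∈ A i, c i ((A i).erase t) ≤ c i (A j)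

variable {m : ℕ} {c : Finset (Fin m) → ℕ}

lemma bm_step (h : BinaryMarginals c) (S : Finset (Fin m)) (a : Fin m) :
    c S ≤ c (insert a S) := by
  by_cases ha : a ∈ S
  · rw [Finset.insert_eq_self.2 ha]
  · rcases h S a ha with h' | h' <;> omega

lemma bm_insert_le (h : BinaryMarginals c) (S : Finset (Fin m)) (a : Fin m) :
    c (insert a S) ≤ c S + 1 := by
  by_cases ha : a ∈ S
  · rw [Finset.insert_eq_self.2 ha]; omega
  · rcases h S a ha with h' | h' <;> omega

lemma bm_mono (h : BinaryMarginals c) {S T : Finset (Fin m)} (hST : S ⊆ T) : c S ≤ c T := by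
  have H : ∀ (k : ℕ) (S T : Finset (Fin m)), S ⊆ T → (T \ S).card = k → c S ≤ c T := by
    intro k
    induction k with
    | zero =>
      intro S T hST hc
      have : T \ S = ∅ := Finset.card_eq_zero.1 hc
      have hTS : T ⊆ S := by
        intro x hx
        by_contra hxS
        have hmem : x ∈ T \ S := Finset.mem_sdiff.2 ⟨hx, hxS⟩
        simp [‹T \ S = ∅›] at hmem
      rw [Finset.Subset.antisymm hST hTS]
    | succ k ih =>
      intro S T hST hc
      have hne : (T \ S).Nonempty := Finset.card_pos.1 (by omega)
      obtain ⟨t, ht⟩ := hne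
      have htT : t ∈ T := (Finset.mem_sdiff.1 ht).1
      have htS : t ∉ S := (Finset.mem_sdiff.1 ht).2
      have h1 : insert t S ⊆ T := Finset.insert_subset htT hST
      have h2 : (T \ insert t S).card = k := by
        rw [Finset.sdiff_insert, Finset.card_erase_of_mem ht]; omega
      exact le_trans (bm_step h S t) (ih _ _ h1 h2)
  exact H _ S T hST rfl

lemma descent (hb : BinaryMarginals c) (hs : Supermod c) (h0 : c ∅ = 0)
    {A : Finset (Fin m)} (hA : c A ≠ 0) : ∃ t ∈ A, c (A.erase t) < c A := by
  by_contra hcon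
  push_neg at hcon
  have heq : ∀ t ∈ A, c (A.erase t) = c A := fun t ht =>
    le_antisymm (bm_mono hb (Finset.erase_subset _ _)) (hcon t ht)
  have main : ∀ (k : ℕ) (S : Finset (Fin m)), S ⊆ A → (A \ S).card = k → c S = c A := by
    intro k
    induction k with
    | zero =>
      intro S hS hc
      have : A \ S = ∅ := Finset.card_eq_zero.1 hc
      have hAS : A ⊆ S := by
        intro x hx
        by_contra hxS
        have hmem : x ∈ A \ S := Finset.mem_sdiff.2 ⟨hx, hxS⟩
        simp [‹A \ S = ∅›] at hmem
      rw [Finset.Subset.antisymm hS hAS]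
    | succ k ih =>
      intro S hS hc
      obtain ⟨t, ht⟩ : (A \ S).Nonempty := Finset.card_pos.1 (by omega)
      have htA : t ∈ A := (Finset.mem_sdiff.1 ht).1
      have htS : t ∉ S := (Finset.mem_sdiff.1 ht).2
      have hsub : S ⊆ A.erase t := Finset.subset_erase.2 ⟨hS, htS⟩
      have hins : insert t S ⊆ A := Finset.insert_subset htA hS
      have hcard : (A \ insert t S).card = k := by
        rw [Finset.sdiff_insert, Finset.card_erase_of_mem ht]; omega
      have h1 : c (insert t S) = c A := ih _ hins hcard
      have h2 := hs S (A.erase t) t hsub (Finset.notMem_erase t A)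
      rw [Finset.insert_erase htA, h1, heq t htA] at h2
      have h3 : c A ≤ c S := by omega
      exact le_antisymm (bm_mono hb hS) h3
  have hfin := main A.card ∅ (Finset.empty_subset _) (by simp)
  rw [h0] at hfin
  exact hA hfin.symm

def PartOn {n m : ℕ} (E : Finset (Fin m)) (A : Fin n → Finset (Fin m)) : Prop :=
  (∀ i j : Fin n, i ≠ j → Disjoint (A i) (A j)) ∧ Finset.univ.biUnion A = E

variable {n m : ℕ}

lemma part_reindex {E : Finset (Fin m)} {A : Fin n → Finset (Fin m)} (hA : PartOn E A)
    {τ : Fin n → Fin n} (hτ : Function.Injective τ) : PartOn E (fun i => A (τ i)) := by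
  have hτs : Function.Surjective τ := Finite.injective_iff_surjective.1 hτ
  constructor
  · intro i j hij
    exact hA.1 _ _ (fun h => hij (hτ h))
  · ext a
    rw [← hA.2]
    simp only [Finset.mem_biUnion, Finset.mem_univ, true_and]
    constructor
    · rintro ⟨i, h⟩; exact ⟨τ i, h⟩
    · rintro ⟨i, h⟩
      obtain ⟨j, rfl⟩ := hτs i
      exact ⟨j, h⟩

lemma part_exists (hn : 1 ≤ n) (E : Finset (Fin m)) :
    ∃ A : Fin n → Finset (Fin m), PartOn E A := by
  refine ⟨fun i => if i = ⟨0, hn⟩ then E else ∅, ?_, ?_⟩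
  · intro i j hij
    by_cases hi : i = ⟨0, hn⟩ <;> by_cases hj : j = ⟨0, hn⟩ <;>
      simp_all [Finset.disjoint_empty_left, Finset.disjoint_empty_right]
  · ext a
    simp only [Finset.mem_biUnion, Finset.mem_univ, true_and]
    constructor
    · rintro ⟨i, h⟩
      by_cases hi : i = ⟨0, hn⟩ <;> simp_all
    · intro h
      exact ⟨⟨0, hn⟩, by simp [h]⟩

lemma exists_opt (hn : 1 ≤ n) (c : Fin n → Finset (Fin m) → ℕ) (E : Finset (Fin m)) :
    ∃ A, PartOn E A ∧ ∀ B, PartOn E B → ∑ i, c i (A i) ≤ ∑ i, c i (B i) := by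
  classical
  have hne : (Finset.univ.filter (fun A : Fin n → Finset (Fin m) => PartOn E A)).Nonempty := by
    obtain ⟨A, hA⟩ := part_exists hn E
    exact ⟨A, by simp [hA]⟩
  obtain ⟨A, hA, hmin⟩ := Finset.exists_min_image _ (fun A => ∑ i, c i (A i)) hne
  rw [Finset.mem_filter] at hA
  exact ⟨A, hA.2, fun B hB => hmin B (by simp [hB])⟩

lemma exists_nonenvious (hn : 1 ≤ n) (c : Fin n → Finset (Fin m) → ℕ)
    {E : Finset (Fin m)} {A : Fin n → Finset (Fin m)} (hP : PartOn E A)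
    (hopt : ∀ B, PartOn E B → ∑ i, c i (A i) ≤ ∑ i, c i (B i)) :
    ∃ p, ∀ j, c p (A p) ≤ c p (A j) := by
  classical
  by_contra hcon
  push_neg at hcon
  choose f hf using hcon
  -- find a periodic point of f
  have hpig : ∃ a ∈ Finset.range (n + 1), ∃ b ∈ Finset.range (n + 1),
      a ≠ b ∧ f^[a] ⟨0, hn⟩ = f^[b] ⟨0, hn⟩ := by
    apply Finset.exists_ne_map_eq_of_card_lt_of_maps_to
      (t := (Finset.univ : Finset (Fin n)))
    · simp
    · intro a _; exact Finset.mem_univ _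
  obtain ⟨a, -, b, -, hab, habeq⟩ := hpig
  -- wlog a < b
  obtain ⟨a, b, hlt, habeq⟩ : ∃ a b, a < b ∧ f^[a] (⟨0, hn⟩ : Fin n) = f^[b] ⟨0, hn⟩ := by
    rcases lt_or_gt_of_ne hab with h | h
    · exact ⟨a, b, h, habeq⟩
    · exact ⟨b, a, h, habeq.symm⟩
  obtain ⟨y, k, hk0, hper⟩ : ∃ (y : Fin n) (k : ℕ), 0 < k ∧ f^[k] y = y := by
    refine ⟨f^[a] ⟨0, hn⟩, b - a, by omega, ?_⟩
    have h1 : f^[(b - a) + a] (⟨0, hn⟩ : Fin n) = f^[b] ⟨0, hn⟩ := by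
      congr 1; omega
    rw [Function.iterate_add_apply] at h1
    rw [h1, ← habeq]
  clear habeq hab hlt
  have hpp : Function.IsPeriodicPt f k y := hper
  set d := Function.minimalPeriod f y with hd
  have hd0 : 0 < d := hpp.minimalPeriod_pos hk0
  have hdy : f^[d] y = y := Function.iterate_minimalPeriod
  set C : Finset (Fin n) := (Finset.range d).image (fun s => f^[s] y) with hC
  have hyC : y ∈ C := by
    rw [hC]
    exact Finset.mem_image.2 ⟨0, Finset.mem_range.2 hd0, rfl⟩
  have hfC : ∀ i ∈ C, f i ∈ C := by
    intro i hi
    obtain ⟨s, hs, rfl⟩ := Finset.mem_image.1 hi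
    rw [Finset.mem_range] at hs
    have : f (f^[s] y) = f^[s + 1] y := (Function.iterate_succ_apply' f s y).symm
    rw [this]
    by_cases h : s + 1 = d
    · rw [h, hdy]; exact hyC
    · exact Finset.mem_image.2 ⟨s + 1, Finset.mem_range.2 (by omega), rfl⟩
  have hshift : ∀ s : ℕ, f^[s + d] y = f^[s] y := by
    intro s
    rw [Function.iterate_add_apply, hdy]
  have hinjC : ∀ i ∈ C, ∀ j ∈ C, f i = f j → i = j := by
    intro i hi j hj hij
    obtain ⟨s, hs, rfl⟩ := Finset.mem_image.1 hi
    obtain ⟨t, ht, rfl⟩ := Finset.mem_image.1 hj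
    rw [Finset.mem_range] at hs ht
    have h1 : f^[s + 1] y = f^[t + 1] y := by
      rw [Function.iterate_succ_apply' f s y, Function.iterate_succ_apply' f t y]
      exact hij
    have h2 : f^[d - 1] (f^[s + 1] y) = f^[d - 1] (f^[t + 1] y) := by rw [h1]
    rw [← Function.iterate_add_apply, ← Function.iterate_add_apply] at h2
    have hs' : d - 1 + (s + 1) = s + d := by omega
    have ht' : d - 1 + (t + 1) = t + d := by omega
    rw [hs', ht', hshift, hshift] at h2
    exact h2
  set τ : Fin n → Fin n := fun i => if i ∈ C then f i else i with hτ
  have hτinj : Function.Injective τ := by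
    intro i j hij
    rw [hτ] at hij
    by_cases hi : i ∈ C <;> by_cases hj : j ∈ C <;> simp [hi, hj] at hij
    · exact hinjC i hi j hj hij
    · exact absurd (hij ▸ hfC i hi) hj
    · exact absurd (hij ▸ hfC j hj) hi
    · exact hij
  have hlt' : ∑ i, c i (A (τ i)) < ∑ i, c i (A i) := by
    apply Finset.sum_lt_sum
    · intro i _
      by_cases hi : i ∈ C
      · simp only [hτ, if_pos hi]
        exact (hf i).le
      · simp [hτ, hi]
    · refine ⟨y, Finset.mem_univ y, ?_⟩
      simp only [hτ, if_pos hyC]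
      exact hf y
  exact absurd (hopt _ (part_reindex hP hτinj)) (by omega)

lemma key (hn : 1 ≤ n) (c : Fin n → Finset (Fin m) → ℕ)
    (hmarg : ∀ i, BinaryMarginals (c i)) (hsuper : ∀ i, Supermod (c i))
    (h0 : ∀ i, c i ∅ = 0) :
    ∀ E : Finset (Fin m), ∃ A, PartOn E A ∧ EF1 c A ∧
      ∀ B, PartOn E B → ∑ i, c i (A i) ≤ ∑ i, c i (B i) := by
  classical
  intro E
  induction E using Finset.strongInduction with
  | _ E IH =>
  obtain ⟨A, hPA, hoptA⟩ := exists_opt hn c E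
  by_cases hsum : ∑ i, c i (A i) = 0
  · refine ⟨A, hPA, ?_, hoptA⟩
    intro i j hne
    obtain ⟨t, ht⟩ := Finset.nonempty_iff_ne_empty.2 hne
    refine ⟨t, ht, ?_⟩
    have hi0 : c i (A i) = 0 := by
      have := Finset.sum_eq_zero_iff.1 hsum i (Finset.mem_univ i)
      exact this
    have := bm_mono (hmarg i) (Finset.erase_subset t (A i))
    omega
  · -- some agent has positive cost; find a junk chore x
    obtain ⟨i₁, hi₁⟩ : ∃ i, c i (A i) ≠ 0 := by
      by_contra hall
      push_neg at hall
      exact hsum (Finset.sum_eq_zero fun i _ => hall i)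
    obtain ⟨x, hxA, hxlt⟩ := descent (hmarg i₁) (hsuper i₁) (h0 i₁) hi₁
    have hxE : x ∈ E := by
      rw [← hPA.2]
      exact Finset.mem_biUnion.2 ⟨i₁, Finset.mem_univ _, hxA⟩
    obtain ⟨A', hPA', hEF1', hopt'⟩ := IH (E.erase x) (Finset.erase_ssubset hxE)
    -- the erased allocation is a partition of E.erase x with cost < cost A
    have hPA'' : PartOn (E.erase x) (fun i => (A i).erase x) := by
      constructor
      · intro i j hij
        exact Finset.disjoint_of_subset_left (Finset.erase_subset _ _)
          (Finset.disjoint_of_subset_right (Finset.erase_subset _ _) (hPA.1 i j hij))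
      · ext a
        simp only [Finset.mem_biUnion, Finset.mem_univ, true_and, Finset.mem_erase]
        rw [← hPA.2]
        simp only [Finset.mem_biUnion, Finset.mem_univ, true_and]
        tauto
    have hcostA'' : ∑ i, c i ((A i).erase x) < ∑ i, c i (A i) := by
      apply Finset.sum_lt_sum
      · intro i _
        exact bm_mono (hmarg i) (Finset.erase_subset _ _)
      · exact ⟨i₁, Finset.mem_univ _, hxlt⟩
    have hchain : ∑ i, c i (A' i) < ∑ i, c i (A i) :=
      lt_of_le_of_lt (hopt' _ hPA'') hcostA''
    -- non-envious agent p of A'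
    obtain ⟨p, hp⟩ := exists_nonenvious hn c hPA' hopt'
    -- give x to p
    set B : Fin n → Finset (Fin m) := fun i => if i = p then insert x (A' p) else A' i with hB
    have hsubE' : ∀ j, A' j ⊆ E.erase x := by
      intro j
      rw [← hPA'.2]
      exact Finset.subset_biUnion_of_mem A' (Finset.mem_univ j)
    have hxA' : ∀ j, x ∉ A' j := fun j hj => Finset.notMem_erase x E (hsubE' j hj)
    have hPB : PartOn E B := by
      constructor
      · intro i j hij
        simp only [hB]
        rcases eq_or_ne i p with rfl | hi
        · have hj : j ≠ i := fun h => hij h.symm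
          rw [if_pos rfl, if_neg hj]
          rw [Finset.disjoint_insert_left]
          exact ⟨hxA' j, hPA'.1 i j hij⟩
        · rcases eq_or_ne j p with rfl | hj
          · rw [if_neg hi, if_pos rfl]
            rw [Finset.disjoint_insert_right]
            exact ⟨hxA' i, hPA'.1 i j hij⟩
          · rw [if_neg hi, if_neg hj]
            exact hPA'.1 i j hij
      · ext a
        simp only [hB, Finset.mem_biUnion, Finset.mem_univ, true_and]
        constructor
        · rintro ⟨i, hi⟩
          by_cases hip : i = p
          · rw [hip, if_pos rfl, Finset.mem_insert] at hi
            rcases hi with rfl | hi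
            · exact hxE
            · exact (Finset.erase_subset x E) (hsubE' p hi)
          · rw [if_neg hip] at hi
            exact (Finset.erase_subset x E) (hsubE' i hi)
        · intro ha
          by_cases hax : a = x
          · exact ⟨p, by simp [hax]⟩
          · have : a ∈ E.erase x := Finset.mem_erase.2 ⟨hax, ha⟩
            rw [← hPA'.2] at this
            obtain ⟨i, -, hi⟩ := Finset.mem_biUnion.1 this
            refine ⟨i, ?_⟩
            by_cases hip : i = p
            · rw [hip, if_pos rfl]; exact Finset.mem_insert_of_mem (hip ▸ hi)
            · rw [if_neg hip]; exact hi
    have hcostB : ∑ i, c i (B i) ≤ ∑ i, c i (A' i) + 1 := by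
      have h1 : ∀ i ∈ Finset.univ.erase p, c i (B i) = c i (A' i) := by
        intro i hi
        rw [hB]
        simp only [if_neg (Finset.mem_erase.1 hi).1]
      calc ∑ i, c i (B i)
          = ∑ i ∈ Finset.univ.erase p, c i (B i) + c p (B p) :=
            (Finset.sum_erase_add _ _ (Finset.mem_univ p)).symm
        _ ≤ ∑ i ∈ Finset.univ.erase p, c i (A' i) + (c p (A' p) + 1) := by
            rw [Finset.sum_congr rfl h1]
            have : c p (B p) ≤ c p (A' p) + 1 := by
              rw [hB]; simp only [if_pos rfl]
              exact bm_insert_le (hmarg p) _ _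
            omega
        _ = ∑ i, c i (A' i) + 1 := by
            rw [← Finset.sum_erase_add Finset.univ _ (Finset.mem_univ p)]
            omega
    have hoptB : ∀ B', PartOn E B' → ∑ i, c i (B i) ≤ ∑ i, c i (B' i) := by
      intro B' hB'
      have := hoptA B' hB'
      omega
    refine ⟨B, hPB, ?_, hoptB⟩
    -- EF1 of B
    intro i j hne
    by_cases hip : i = p
    · have hBi : B i = insert x (A' p) := by simp [hB, hip]
      by_cases hzero : c i (B i) = 0
      · refine ⟨x, by rw [hBi]; exact Finset.mem_insert_self x _, ?_⟩
        have := bm_mono (hmarg i) (Finset.erase_subset x (B i))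
        omega
      · obtain ⟨t, htB, htlt⟩ := descent (hmarg i) (hsuper i) (h0 i) hzero
        refine ⟨t, htB, ?_⟩
        have hb1 : c i (B i) ≤ c i (A' p) + 1 := by
          rw [hBi]; exact bm_insert_le (hmarg i) _ _
        by_cases hjp : j = p
        · have hBj : B j = B i := by rw [hjp, hip]
          rw [hBj]
          exact htlt.le
        · have hBj : B j = A' j := by simp [hB, hjp]
          rw [hBj]
          have h2 : c i (A' p) ≤ c i (A' j) := by rw [hip]; exact hp j
          omega
    · have hBi : B i = A' i := by simp [hB, hip]
      rw [hBi] at hne ⊢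
      obtain ⟨t, ht, hle⟩ := hEF1' i j hne
      refine ⟨t, ht, ?_⟩
      by_cases hjp : j = p
      · have hBj : B j = insert x (A' p) := by simp [hB, hjp]
        rw [hBj]
        refine le_trans hle ?_
        rw [hjp]
        exact bm_mono (hmarg i) (Finset.subset_insert x _)
      · have hBj : B j = A' j := by simp [hB, hjp]
        rw [hBj]
        exact hle

/-- under binary supermodular costs, there is a complete allocation that is
simultaneously EF1 and social-cost minimizing. -/
theorem exists_ef1_and_social_cost_minimizing (n m : ℕ) (hn : 1 ≤ n)
    (c : Fin n → Finset (Fin m) → ℕ)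
    (hmarg : ∀ i, BinaryMarginals (c i)) (hsuper : ∀ i, Supermod (c i))
    (h0 : ∀ i, c i ∅ = 0) :
    ∃ A : Fin n → Finset (Fin m), IsPartition A ∧ EF1 c A ∧
      ∀ B : Fin n → Finset (Fin m), IsPartition B →
        ∑ i, c i (A i) ≤ ∑ i, c i (B i) := by
  obtain ⟨A, hPA, hEF1A, hopt⟩ := key hn c hmarg hsuper h0 Finset.univ
  exact ⟨A, ⟨hPA.1, hPA.2⟩, hEF1A, fun B hB => hopt B ⟨hB.1, hB.2⟩⟩
end

section
/- Under binary supermodular cost functions with c_i(∅)=0, a Lorenz dominating complete allocation always exists; moreover its sorted cost profile consists of ⌈c*/n⌉ repeated (c* mod n) times followed by ⌊c*/n⌋ repeated n - (c* mod n) times, where c* is the minimum social cost. -/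
/-- The sum of the `k` largest entries of the profile `p` (sum of the `k` largest
components of the sorted profile). -/
def topSum {n : ℕ} (p : Fin n → ℕ) (k : ℕ) : ℕ :=
  (Finset.univ.powersetCard k).sup fun S => ∑ i ∈ S, p i

/-- Allocation `A` Lorenz dominates allocation `B` (for nonincreasing sorted cost
profiles): every prefix sum of the sorted cost profile of `A` is at most the
corresponding prefix sum for `B`. -/
def LorenzDominates {n m : ℕ} (c : Fin n → Finset (Fin m) → ℕ)
    (A B : Fin n → Finset (Fin m)) : Prop :=
  ∀ k : ℕ, topSum (fun i => c i (A i)) k ≤ topSum (fun i => c i (B i)) k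

/-!
Among the complete allocations of social cost `c*`, take one minimising the sum of squared costs.
Supermodularity and binary marginals give every agent of positive cost a chore whose removal lowers
its cost by exactly one. Handing that chore to an agent whose cost is at least two lower raises
the latter's cost by at most one, hence by exactly one since `c*` is minimal, and then the sum of
squares drops. So the costs differ pairwise by at most one, which forces the profile
`⌈c*/n⌉ ^ (c* mod n), ⌊c*/n⌋ ^ (n - c* mod n)`. Among all profiles of total at least `c*`, this
balanced one has the least sum of its `k` largest entries for every `k`.
-/

open Finset

section Cost

variable {m : ℕ} {c : Finset (Fin m) → ℕ}

lemma BinaryMarginals.insert_le (hc : BinaryMarginals c) (S : Finset (Fin m)) (a : Fin m) :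
    c (insert a S) ≤ c S + 1 := by
  by_cases ha : a ∈ S
  · rw [insert_eq_self.mpr ha]
    omega
  · rcases hc S a ha with h | h <;> omega

/-- Supermodularity bounds the marginal of `a` at every `U ⊆ S` by its marginal at `S.erase a`,
so if all the latter are nonpositive, `c` can only decrease along any chain from `∅` up to `S`. -/
lemma Supermod.le_empty_of_forall_le_erase (hc : Supermod c) {S : Finset (Fin m)}
    (hS : ∀ a ∈ S, c S ≤ c (S.erase a)) : c S ≤ c ∅ := by
  suffices ∀ U ⊆ S, c U ≤ c ∅ from this S subset_rfl
  intro U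
  induction U using Finset.induction_on with
  | empty => exact fun _ => le_rfl
  | insert a U haU ih =>
    intro hU
    have haS : a ∈ S := hU (mem_insert_self a U)
    have hUS : U ⊆ S.erase a := fun x hx => mem_erase.mpr
      ⟨fun hxa => haU (hxa ▸ hx), hU (mem_insert_of_mem hx)⟩
    have hsup := hc U (S.erase a) a hUS (notMem_erase a S)
    rw [insert_erase haS] at hsup
    have := hS a haS
    have := ih ((subset_insert a U).trans hU)
    omega

lemma exists_erase_add_one_eq (hmarg : BinaryMarginals c) (hsuper : Supermod c)
    {S : Finset (Fin m)} (hS : c ∅ < c S) : ∃ a ∈ S, c (S.erase a) + 1 = c S := by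
  by_contra! hne
  refine hS.not_ge (hsuper.le_empty_of_forall_le_erase fun a ha => ?_)
  have := hmarg (S.erase a) a (notMem_erase a S)
  rw [insert_erase ha] at this
  have := hne a ha
  omega

end Cost

lemma Finset.sum_add_eq_sum_add_of_eq_off_pair {ι M : Type*} [Fintype ι] [DecidableEq ι]
    [AddCommMonoid M] {f g : ι → M} {i j : ι} (hij : i ≠ j)
    (h : ∀ t, t ≠ i → t ≠ j → f t = g t) :
    ∑ t, f t + (g i + g j) = ∑ t, g t + (f i + f j) := by
  have hrest : ∑ t ∈ univ \ {i, j}, f t = ∑ t ∈ univ \ {i, j}, g t :=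
    sum_congr rfl fun t ht => by
      simp only [mem_sdiff, mem_insert, mem_singleton, not_or] at ht
      exact h t ht.2.1 ht.2.2
  rw [← sum_sdiff (subset_univ {i, j}) (f := f), ← sum_sdiff (subset_univ {i, j}) (f := g),
    sum_pair hij, sum_pair hij, hrest]
  abel

section Allocation

variable {n m : ℕ}

lemma isPartition_iff_existsUnique (A : Fin n → Finset (Fin m)) :
    IsPartition A ↔ ∀ x, ∃! i, x ∈ A i := by
  constructor
  · rintro ⟨hdisj, hcover⟩ x
    obtain ⟨i, -, hi⟩ := mem_biUnion.mp (hcover ▸ mem_univ x)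
    refine ⟨i, hi, fun j hj => ?_⟩
    by_contra hji
    exact disjoint_left.mp (hdisj j i hji) hj hi
  · intro h
    refine ⟨fun i j hij => disjoint_left.mpr fun x hi hj => hij ((h x).unique hi hj), ?_⟩
    exact eq_univ_of_forall fun x => mem_biUnion.mpr
      ⟨(h x).choose, mem_univ _, (h x).choose_spec.1⟩

-- Erasing `a` at every agent other than `j` spares naming the agent that owned it.
def reassign (A : Fin n → Finset (Fin m)) (j : Fin n) (a : Fin m) : Fin n → Finset (Fin m) :=
  fun t => if t = j then insert a (A t) else (A t).erase a

lemma mem_reassign {A : Fin n → Finset (Fin m)} {j t : Fin n} {a x : Fin m} :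
    x ∈ reassign A j a t ↔ if x = a then t = j else x ∈ A t := by
  unfold reassign
  split_ifs <;> simp_all

lemma IsPartition.reassign {A : Fin n → Finset (Fin m)} (hA : IsPartition A) (j : Fin n)
    (a : Fin m) : IsPartition (reassign A j a) := by
  rw [isPartition_iff_existsUnique] at hA ⊢
  intro x
  simp only [mem_reassign]
  split_ifs
  · exact existsUnique_eq
  · exact hA x

lemma reassign_self (A : Fin n → Finset (Fin m)) (j : Fin n) (a : Fin m) :
    reassign A j a j = insert a (A j) := if_pos rfl

lemma reassign_of_ne (A : Fin n → Finset (Fin m)) {j t : Fin n} (a : Fin m) (h : t ≠ j) :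
    reassign A j a t = (A t).erase a := if_neg h

end Allocation

section Exchange

variable {n m : ℕ} {c : Fin n → Finset (Fin m) → ℕ}

lemma le_add_one_of_sum_sq_minimal (hmarg : ∀ i, BinaryMarginals (c i))
    (hsuper : ∀ i, Supermod (c i)) (h0 : ∀ i, c i ∅ = 0) {A : Fin n → Finset (Fin m)}
    (hA : IsPartition A) (hopt : ∀ B, IsPartition B → ∑ i, c i (A i) ≤ ∑ i, c i (B i))
    (hsq : ∀ B, IsPartition B → ∑ i, c i (B i) = ∑ i, c i (A i) →
      ∑ i, c i (A i) ^ 2 ≤ ∑ i, c i (B i) ^ 2)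
    (i j : Fin n) : c i (A i) ≤ c j (A j) + 1 := by
  by_contra! hij
  have hne : i ≠ j := by rintro rfl; omega
  obtain ⟨a, ha, hcost_i⟩ :=
    exists_erase_add_one_eq (S := A i) (hmarg i) (hsuper i) (by rw [h0 i]; omega)
  have hB : IsPartition (reassign A j a) := hA.reassign j a
  have hcost_j : c j (reassign A j a j) ≤ c j (A j) + 1 := by
    rw [reassign_self]
    exact (hmarg j).insert_le _ _
  have hrest : ∀ t, t ≠ i → t ≠ j → c t (reassign A j a t) = c t (A t) := fun t hti htj => by
    rw [reassign_of_ne A a htj,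
      erase_eq_of_notMem (disjoint_left.mp (hA.1 i t (Ne.symm hti)) ha)]
  have hsum := sum_add_eq_sum_add_of_eq_off_pair hne hrest
  have hsum_sq := sum_add_eq_sum_add_of_eq_off_pair hne
    (f := fun t => c t (reassign A j a t) ^ 2) (g := fun t => c t (A t) ^ 2)
    fun t hti htj => by rw [hrest t hti htj]
  simp only [reassign_of_ne A a hne] at hsum hsum_sq
  have hle := hopt _ hB
  have hcost_j' : c j (reassign A j a j) = c j (A j) + 1 := by omega
  have := hsq _ hB (by omega)
  rw [hcost_j'] at hsum_sq
  -- `(x - 1) ^ 2 + (y + 1) ^ 2 < x ^ 2 + y ^ 2` as `y + 2 ≤ x`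
  nlinarith

lemma exists_balanced_optimal (hmarg : ∀ i, BinaryMarginals (c i))
    (hsuper : ∀ i, Supermod (c i)) (h0 : ∀ i, c i ∅ = 0) {cstar : ℕ}
    (hcstar : IsLeast {s : ℕ | ∃ A : Fin n → Finset (Fin m), IsPartition A ∧
        s = ∑ i, c i (A i)} cstar) :
    ∃ A : Fin n → Finset (Fin m), IsPartition A ∧ ∑ i, c i (A i) = cstar ∧
      ∀ i j, c i (A i) ≤ c j (A j) + 1 := by
  classical
  obtain ⟨⟨A₀, hA₀, hA₀sum⟩, hlb⟩ := hcstar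
  obtain ⟨A, hAmem, hAmin⟩ := exists_min_image
    (univ.filter fun A => IsPartition A ∧ ∑ i, c i (A i) = cstar)
    (fun A => ∑ i, c i (A i) ^ 2) ⟨A₀, by simp [hA₀, hA₀sum]⟩
  obtain ⟨hA, hAsum⟩ := (mem_filter.mp hAmem).2
  refine ⟨A, hA, hAsum, le_add_one_of_sum_sq_minimal hmarg hsuper h0 hA
    (fun B hB => hAsum ▸ hlb ⟨B, hB, rfl⟩) fun B hB hBsum => hAmin B ?_⟩
  simp [hB, hBsum, hAsum]

end Exchange

section Profile

variable {ι : Type*} {p : ι → ℕ} {q r : ℕ}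

lemma sum_eq_card_mul_add_card_filter {S : Finset ι} (hp : ∀ i ∈ S, p i = q ∨ p i = q + 1) :
    ∑ i ∈ S, p i = #S * q + #{i ∈ S | p i = q + 1} := by
  calc ∑ i ∈ S, p i = ∑ i ∈ S, (q + if p i = q + 1 then 1 else 0) :=
        sum_congr rfl fun i hi => by rcases hp i hi with h | h <;> simp [h]
    _ = #S * q + #{i ∈ S | p i = q + 1} := by
        rw [sum_add_distrib, sum_const, smul_eq_mul, sum_boole, Nat.cast_id]

variable [Fintype ι]

lemma eq_div_or_eq_div_add_one_of_forall_le_add_one [Nonempty ι] (h : ∀ i j, p i ≤ p j + 1) :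
    (∀ i, p i = (∑ j, p j) / Fintype.card ι ∨ p i = (∑ j, p j) / Fintype.card ι + 1) ∧
      #{i | p i = (∑ j, p j) / Fintype.card ι + 1} = (∑ j, p j) % Fintype.card ι := by
  obtain ⟨i₀, hi₀⟩ := Finite.exists_min p
  have hp : ∀ i, p i = p i₀ ∨ p i = p i₀ + 1 := fun i => by
    have := hi₀ i
    have := h i i₀
    omega
  have hsum := sum_eq_card_mul_add_card_filter (S := univ) fun i _ => hp i
  have hlt : #{i | p i = p i₀ + 1} < Fintype.card ι :=
    card_lt_univ_of_notMem (x := i₀) (by simp)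
  obtain ⟨hq, hr⟩ := (Nat.div_mod_unique Fintype.card_pos).mpr
    (⟨by rw [hsum, card_univ, add_comm], hlt⟩ :
      #{i | p i = p i₀ + 1} + Fintype.card ι * p i₀ = ∑ j, p j ∧ _)
  rw [hq, hr]
  exact ⟨hp, rfl⟩

lemma map_univ_eq_replicate_add_replicate (hp : ∀ i, p i = q ∨ p i = q + 1)
    (hr : #{i | p i = q + 1} = r) :
    Multiset.map p univ.val =
      Multiset.replicate r (q + 1) + Multiset.replicate (Fintype.card ι - r) q := by
  have hcompl : #{i | ¬p i = q + 1} = Fintype.card ι - r := by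
    have := card_filter_add_card_filter_not (s := univ) fun i => p i = q + 1
    rw [card_univ] at this
    omega
  rw [← Multiset.filter_add_not (fun i => p i = q + 1) univ.val, Multiset.map_add]
  congr 1 <;> rw [Multiset.eq_replicate]
  · refine ⟨by rw [Multiset.card_map, ← filter_val]; exact hr, ?_⟩
    simp
  · refine ⟨by rw [Multiset.card_map, ← filter_val]; exact hcompl, ?_⟩
    simp only [Multiset.mem_map, Multiset.mem_filter]
    rintro _ ⟨i, ⟨-, hi⟩, rfl⟩
    exact (hp i).resolve_right hi

end Profile

lemma Nat.add_sub_one_div_eq_div_add_one {s n : ℕ} (hn : 0 < n) (hs : 0 < s % n) :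
    (s + n - 1) / n = s / n + 1 := by
  have := Nat.mod_add_div s n
  have := Nat.mod_lt s hn
  rw [show s + n - 1 = (s % n - 1) + n * (s / n + 1) by rw [mul_add]; omega,
    Nat.add_mul_div_left _ _ hn, Nat.div_eq_of_lt (by omega), zero_add]

section TopSum

variable {n : ℕ} (p : Fin n → ℕ) {k q r : ℕ}

lemma topSum_eq_zero_of_lt (hk : n < k) : topSum p k = 0 := by
  rw [topSum, powersetCard_eq_empty.mpr (by simpa using hk), sup_empty, bot_eq_zero]

lemma topSum_le_of_forall_eq_or_eq_add_one (hp : ∀ i, p i = q ∨ p i = q + 1)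
    (hr : #{i | p i = q + 1} = r) (k : ℕ) : topSum p k ≤ k * q + min k r := by
  refine Finset.sup_le fun S hS => ?_
  obtain ⟨-, rfl⟩ := mem_powersetCard.mp hS
  rw [sum_eq_card_mul_add_card_filter fun i _ => hp i]
  have : #{i ∈ S | p i = q + 1} ≤ #S := card_filter_le _ _
  have : #{i ∈ S | p i = q + 1} ≤ r := hr ▸ card_le_card (filter_subset_filter _ (subset_univ S))
  omega

lemma exists_card_eq_sum_eq_topSum (hk : k ≤ n) :
    ∃ S : Finset (Fin n), #S = k ∧ ∑ i ∈ S, p i = topSum p k := by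
  obtain ⟨S, hS, hsup⟩ := exists_mem_eq_sup _
    (powersetCard_nonempty (s := univ).mpr (by simpa using hk)) fun S : Finset (Fin n) => ∑ i ∈ S, p i
  exact ⟨S, (mem_powersetCard.mp hS).2, hsup.symm⟩

/-- Swapping `j ∈ S` for `i ∉ S` gives another `#S`-subset, whose sum is bounded by `topSum`. -/
lemma le_of_sum_eq_topSum {S : Finset (Fin n)} (hS : ∑ i ∈ S, p i = topSum p #S) {i j : Fin n}
    (hi : i ∉ S) (hj : j ∈ S) : p i ≤ p j := by
  have hi' : i ∉ S.erase j := fun h => hi (mem_of_mem_erase h)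
  have hmem : insert i (S.erase j) ∈ univ.powersetCard #S :=
    mem_powersetCard.mpr ⟨subset_univ _, by rw [card_insert_of_notMem hi', card_erase_add_one hj]⟩
  have hle : ∑ x ∈ insert i (S.erase j), p x ≤ topSum p #S :=
    le_sup (f := fun S => ∑ i ∈ S, p i) hmem
  rw [sum_insert hi', ← hS, ← sum_erase_add S p hj] at hle
  omega

/-- Let `S` realise `topSum p k`. Either some `i ∉ S` has `p i > q`, and then so does every
member of `S`; or the complement of `S` carries at most `(n - k) * q` of the total. -/
lemma le_topSum (hk : k ≤ n) (hsum : n * q + r ≤ ∑ i, p i) : k * q + min k r ≤ topSum p k := by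
  obtain ⟨S, hcard, hS⟩ := exists_card_eq_sum_eq_topSum p hk
  rw [← hS]
  by_cases hbig : ∃ i ∉ S, q + 1 ≤ p i
  · obtain ⟨i, hi, hqi⟩ := hbig
    have hS_ge : #S • (q + 1) ≤ ∑ j ∈ S, p j := card_nsmul_le_sum S p (q + 1) fun j hj =>
      hqi.trans (le_of_sum_eq_topSum p (hcard ▸ hS) hi hj)
    rw [smul_eq_mul, hcard, mul_add_one] at hS_ge
    have := min_le_left k r
    omega
  · push Not at hbig
    have hcompl : ∑ i ∈ univ \ S, p i ≤ #(univ \ S) • q :=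
      sum_le_card_nsmul _ _ _ fun i hi => Nat.lt_succ_iff.mp (hbig i (mem_sdiff.mp hi).2)
    rw [card_univ_sdiff, hcard, Fintype.card_fin, smul_eq_mul] at hcompl
    have := sum_sdiff (subset_univ S) (f := p)
    have : n * q = k * q + (n - k) * q := by rw [← add_mul, Nat.add_sub_cancel' hk]
    have := min_le_right k r
    omega

end TopSum

/-- under binary supermodular costs, a Lorenz dominating complete
allocation exists, and its (sorted) cost profile consists of `⌈c*/n⌉` repeated
`c* mod n` times followed by `⌊c*/n⌋` repeated `n - c* mod n` times. -/
theorem exists_lorenz_dominating_allocation (n m : ℕ) (hn : 1 ≤ n)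
    (c : Fin n → Finset (Fin m) → ℕ)
    (hmarg : ∀ i, BinaryMarginals (c i)) (hsuper : ∀ i, Supermod (c i))
    (h0 : ∀ i, c i ∅ = 0)
    (cstar : ℕ)
    (hcstar : IsLeast {s : ℕ | ∃ A : Fin n → Finset (Fin m), IsPartition A ∧
        s = ∑ i, c i (A i)} cstar) :
    ∃ A : Fin n → Finset (Fin m), IsPartition A ∧
      (∀ B : Fin n → Finset (Fin m), IsPartition B → LorenzDominates c A B) ∧
      (Multiset.map (fun i => c i (A i)) (Finset.univ.val : Multiset (Fin n))) =
        Multiset.replicate (cstar % n) ((cstar + n - 1) / n) +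
          Multiset.replicate (n - cstar % n) (cstar / n) := by
  have : Nonempty (Fin n) := ⟨⟨0, hn⟩⟩
  obtain ⟨A, hA, hAsum, hbal⟩ := exists_balanced_optimal hmarg hsuper h0 hcstar
  obtain ⟨hp, hr⟩ := eq_div_or_eq_div_add_one_of_forall_le_add_one hbal
  rw [hAsum, Fintype.card_fin] at hp hr
  refine ⟨A, hA, fun B hB k => ?_, ?_⟩
  · rcases le_or_gt k n with hk | hk
    · refine (topSum_le_of_forall_eq_or_eq_add_one _ hp hr k).trans (le_topSum _ hk ?_)
      rw [Nat.div_add_mod]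
      exact hcstar.2 ⟨B, hB, rfl⟩
    · simp only [topSum_eq_zero_of_lt _ hk, zero_le]
  · rw [map_univ_eq_replicate_add_replicate hp hr, Fintype.card_fin]
    rcases (cstar % n).eq_zero_or_pos with hr0 | hr0
    · simp [hr0]
    · rw [Nat.add_sub_one_div_eq_div_add_one hn hr0]
end

section
/- Let α_1 ≥ ... ≥ α_n be a nonincreasing integer sequence with values in {⌈s/n⌉, ⌊s/n⌋} summing to s, and let β_1 ≥ ... ≥ β_n be any nonincreasing nonnegative integer sequence with ∑_i β_i ≥ s. Then for every ℓ ∈ [n], ∑_{i=1}^ℓ α_i ≤ ∑_{i=1}^ℓ β_i. -/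
/-!
If a prefix sum of `β` fell below that of `α`, some index `i` of the prefix would have
`β i < α i`. Since the values of `α` differ by at most one, `β i ≤ α j` for every `j`, and as
`β` is nonincreasing its whole tail beyond the prefix is dominated by the tail of `α`.
Adding prefix and tail gives `∑ β < ∑ α = s`, contradicting `s ≤ ∑ β`.
-/

open Finset

theorem Finset.sum_le_sum_of_total_le_of_le_add_one {ι : Type*} [Fintype ι] [DecidableEq ι]
    (α β : ι → ℕ) (hα : ∀ i j, α i ≤ α j + 1) (hsum : ∑ i, α i ≤ ∑ i, β i)
    (S : Finset ι) (hS : ∀ i ∈ S, ∀ j ∉ S, β j ≤ β i) :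
    ∑ i ∈ S, α i ≤ ∑ i ∈ S, β i := by
  by_contra! hlt
  obtain ⟨i, hiS, hi⟩ := exists_lt_of_sum_lt hlt
  have htail : ∑ j ∈ Sᶜ, β j ≤ ∑ j ∈ Sᶜ, α j := by
    refine sum_le_sum fun j hj => ?_
    have := hS i hiS j (mem_compl.mp hj)
    have := hα i j
    omega
  have := sum_add_sum_compl S α
  have := sum_add_sum_compl S β
  omega

theorem Nat.add_sub_one_div_le_div_add_one (s n : ℕ) : (s + n - 1) / n ≤ s / n + 1 := by
  rcases n.eq_zero_or_pos with rfl | hn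
  · simp
  calc (s + n - 1) / n ≤ (s + n) / n := Nat.div_le_div_right (by omega)
    _ = s / n + 1 := Nat.add_div_right s hn

theorem balanced_profile_lorenz_dominates_general (n s : ℕ)
    (α β : Fin n → ℕ)
    (hαval : ∀ i, α i = (s + n - 1) / n ∨ α i = s / n)
    (hαsum : ∑ i, α i = s)
    (hβmono : ∀ i j : Fin n, i ≤ j → β j ≤ β i)
    (hβsum : s ≤ ∑ i, β i) :
    ∀ ℓ : ℕ, ∑ i ∈ Finset.univ.filter (fun i : Fin n => (i : ℕ) < ℓ), α i ≤
      ∑ i ∈ Finset.univ.filter (fun i : Fin n => (i : ℕ) < ℓ), β i := by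
  intro ℓ
  refine sum_le_sum_of_total_le_of_le_add_one α β (fun i j => ?_) (hαsum ▸ hβsum) _
    fun i hi j hj => hβmono i j ?_
  · have hceil_le := Nat.add_sub_one_div_le_div_add_one s n
    have hfloor_le_ceil : s / n ≤ (s + n - 1) / n :=
      Nat.div_le_div_right (by have := i.pos; omega)
    rcases hαval i with h | h <;> rcases hαval j with h' | h' <;> omega
  · simp only [mem_filter, mem_univ, true_and] at hi hj
    exact Fin.le_def.mpr (by omega)

/-- if `α` is a nonincreasing sequence with values in
`{⌈s/n⌉, ⌊s/n⌋}` summing to `s`, and `β` is any nonincreasing nonnegative integer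
sequence with total at least `s`, then every prefix sum of `α` is at most the
corresponding prefix sum of `β`. -/
theorem balanced_profile_lorenz_dominates (n s : ℕ) (hn : 1 ≤ n)
    (α β : Fin n → ℕ)
    (hαmono : ∀ i j : Fin n, i ≤ j → α j ≤ α i)
    (hαval : ∀ i, α i = (s + n - 1) / n ∨ α i = s / n)
    (hαsum : ∑ i, α i = s)
    (hβmono : ∀ i j : Fin n, i ≤ j → β j ≤ β i)
    (hβsum : s ≤ ∑ i, β i) :
    ∀ ℓ : ℕ, ∑ i ∈ Finset.univ.filter (fun i : Fin n => (i : ℕ) < ℓ), α i ≤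
      ∑ i ∈ Finset.univ.filter (fun i : Fin n => (i : ℕ) < ℓ), β i :=
  balanced_profile_lorenz_dominates_general n s α β hαval hαsum hβmono hβsum
end

section
/- There exists a chore division instance with 3 agents, 11 chores, and binary supermodular cost functions (c_1(S)=|S|, c_2(S)=c_3(S)=max{0,|S|-3}) in which no allocation is both Lorenz dominating and MMS-fair, and no allocation is both Lorenz dominating and EF1. In particular, every Lorenz dominating allocation has sorted cost profile (2,2,1), while every MMS-fair allocation gives agent 1 cost at least 3. -/
/-- The costs of the counterexample instance: agent 1 has `c S = |S|`, and agents 2 and 3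
have `c S = max {0, |S| - 3}` (truncated subtraction). -/
def exCost : Fin 3 → Finset (Fin 11) → ℕ :=
  fun i S => if i = 0 then S.card else S.card - 3

/-!
A Lorenz dominating allocation must do at least as well, in every prefix of its sorted cost
profile, as the allocation `({0}, 5 chores, 5 chores)` of profile `(1, 2, 2)`: all costs are at
most `2` and any two sum to at most `4`. Since agents 2 and 3 pay nothing for their first three
chores, this forces agent 1 (index `0`) to hold one or two chores and one of the others to hold
five. That agent violates EF1 towards agent 1: five chores minus one still cost it `1`, while
agent 1's bundle costs it `0`. On the other hand the partition `(4, 4, 3)` shows that the maximin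
shares of agents 2 and 3 are at most `1`, so an MMS-fair allocation gives each of them at most
four chores, and agent 1 at least three.
-/

section Marginals

variable {m : ℕ}

lemma binaryMarginals_card_sub (k : ℕ) :
    BinaryMarginals fun S : Finset (Fin m) => S.card - k := by
  intro S a ha
  simp only [Finset.card_insert_of_notMem ha]
  omega

lemma supermod_card_sub (k : ℕ) : Supermod fun S : Finset (Fin m) => S.card - k := by
  intro S T a hST haT
  have hS := Finset.card_insert_of_notMem fun h => haT (hST h)
  have hT := Finset.card_insert_of_notMem haT
  have hle := Finset.card_le_card hST
  simp only [hS, hT]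
  omega

end Marginals

lemma IsPartition.sum_card {n m : ℕ} {A : Fin n → Finset (Fin m)} (hA : IsPartition A) :
    ∑ i, (A i).card = m := by
  simpa [Finset.card_biUnion fun i _ j _ hij => hA.1 i j hij] using congrArg Finset.card hA.2

lemma sum_le_topSum {n : ℕ} (p : Fin n → ℕ) (S : Finset (Fin n)) :
    ∑ i ∈ S, p i ≤ topSum p S.card :=
  Finset.le_sup (f := fun S => ∑ i ∈ S, p i) (Finset.mem_powersetCard_univ.2 rfl)

lemma LorenzDominates.sum_le {n m : ℕ} {c : Fin n → Finset (Fin m) → ℕ}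
    {A B : Fin n → Finset (Fin m)} (h : LorenzDominates c A B) (S : Finset (Fin n)) :
    ∑ i ∈ S, c i (A i) ≤ topSum (fun i => c i (B i)) S.card :=
  (sum_le_topSum _ S).trans (h S.card)

lemma exCost_eq (i : Fin 3) : exCost i = fun S => S.card - if i = 0 then 0 else 3 := by
  funext S
  by_cases hi : i = 0 <;> simp [exCost, hi]

def lorenzAlloc : Fin 3 → Finset (Fin 11) := ![{0}, {1, 2, 3, 4, 5}, {6, 7, 8, 9, 10}]

def mmsPartition : Fin 3 → Finset (Fin 11) := ![{0, 1, 2, 3}, {4, 5, 6, 7}, {8, 9, 10}]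

lemma isPartition_lorenzAlloc : IsPartition lorenzAlloc := by
  unfold IsPartition; decide

lemma isPartition_mmsPartition : IsPartition mmsPartition := by
  unfold IsPartition; decide

lemma card_add_card_add_card {A : Fin 3 → Finset (Fin 11)} (hA : IsPartition A) :
    (A 0).card + (A 1).card + (A 2).card = 11 := by
  simpa [Fin.sum_univ_three] using hA.sum_card

lemma card_of_lorenzDominating {A : Fin 3 → Finset (Fin 11)} (hA : IsPartition A)
    (hL : ∀ B, IsPartition B → LorenzDominates exCost A B) :
    ((A 0).card = 1 ∧ (A 1).card = 5 ∧ (A 2).card = 5) ∨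
    ((A 0).card = 2 ∧ (A 1).card = 5 ∧ (A 2).card = 4) ∨
    ((A 0).card = 2 ∧ (A 1).card = 4 ∧ (A 2).card = 5) := by
  have hle := (hL lorenzAlloc isPartition_lorenzAlloc).sum_le
  have top1 : topSum (fun i => exCost i (lorenzAlloc i)) 1 = 2 := by decide
  have top2 : topSum (fun i => exCost i (lorenzAlloc i)) 2 = 4 := by decide
  have h0 : exCost 0 (A 0) ≤ 2 := by simpa [top1] using hle {0}
  have h1 : exCost 1 (A 1) ≤ 2 := by simpa [top1] using hle {1}
  have h2 : exCost 2 (A 2) ≤ 2 := by simpa [top1] using hle {2}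
  have h01 : exCost 0 (A 0) + exCost 1 (A 1) ≤ 4 := by simpa [top2] using hle {0, 1}
  have h02 : exCost 0 (A 0) + exCost 2 (A 2) ≤ 4 := by simpa [top2] using hle {0, 2}
  have h12 : exCost 1 (A 1) + exCost 2 (A 2) ≤ 4 := by simpa [top2] using hle {1, 2}
  have := card_add_card_add_card hA
  simp [exCost] at h0 h1 h2 h01 h02 h12
  omega

lemma not_ef1_of_card {A : Fin 3 → Finset (Fin 11)} {j : Fin 3} (hj : j ≠ 0)
    (h0 : (A 0).card ≤ 2) (h5 : (A j).card = 5) : ¬ EF1 exCost A := by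
  intro hE
  obtain ⟨t, ht, hle⟩ := hE j 0 fun h => by simp [h] at h5
  simp only [exCost, hj, if_false, Finset.card_erase_of_mem ht, h5] at hle
  omega

lemma mmsShare_le_one {τ : ℕ} {i : Fin 3} (hi : i ≠ 0)
    (hτ : IsLeast {t : ℕ | ∃ X : Fin 3 → Finset (Fin 11), IsPartition X ∧
        IsGreatest (Set.range fun j => exCost i (X j)) t} τ) : τ ≤ 1 := by
  have hmax : IsGreatest (Set.range fun j => exCost i (mmsPartition j)) 1 := by
    fin_cases i
    · exact absurd rfl hi
    all_goals exact ⟨⟨0, by decide⟩, by rintro _ ⟨j, rfl⟩; fin_cases j <;> decide⟩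
  exact hτ.2 ⟨mmsPartition, isPartition_mmsPartition, hmax⟩

lemma three_le_card_of_mmsFair {τ : Fin 3 → ℕ}
    (hτ : ∀ i, IsLeast {t : ℕ | ∃ X : Fin 3 → Finset (Fin 11), IsPartition X ∧
        IsGreatest (Set.range fun j => exCost i (X j)) t} (τ i))
    {A : Fin 3 → Finset (Fin 11)} (hA : IsPartition A) (hM : ∀ i, exCost i (A i) ≤ τ i) :
    3 ≤ (A 0).card := by
  have h1 := (hM 1).trans (mmsShare_le_one (by decide) (hτ 1))
  have h2 := (hM 2).trans (mmsShare_le_one (by decide) (hτ 2))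
  have := card_add_card_add_card hA
  simp [exCost] at h1 h2
  omega

/-- in the instance with 3 agents and 11 chores where
`c₁ S = |S|` and `c₂ S = c₃ S = max {0, |S| - 3}` (binary supermodular costs),
no allocation is both Lorenz dominating and MMS-fair, no allocation is both Lorenz
dominating and EF1, every Lorenz dominating allocation has sorted cost profile `(2,2,1)`,
and every MMS-fair allocation gives agent 1 cost at least `3`. -/
theorem lorenz_mms_ef1_incomparable
    (τ : Fin 3 → ℕ)
    (hτ : ∀ i, IsLeast {t : ℕ | ∃ X : Fin 3 → Finset (Fin 11), IsPartition X ∧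
        IsGreatest (Set.range fun j => exCost i (X j)) t} (τ i)) :
    (∀ i, BinaryMarginals (exCost i) ∧ Supermod (exCost i) ∧ exCost i ∅ = 0) ∧
    (∀ A : Fin 3 → Finset (Fin 11), IsPartition A →
      (∀ B, IsPartition B → LorenzDominates exCost A B) →
      ¬ (∀ i, exCost i (A i) ≤ τ i)) ∧
    (∀ A : Fin 3 → Finset (Fin 11), IsPartition A →
      (∀ B, IsPartition B → LorenzDominates exCost A B) →
      ¬ EF1 exCost A) ∧
    (∀ A : Fin 3 → Finset (Fin 11), IsPartition A →
      (∀ B, IsPartition B → LorenzDominates exCost A B) →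
      (Multiset.map (fun i => exCost i (A i)) (Finset.univ.val : Multiset (Fin 3))) =
        {2, 2, 1}) ∧
    (∀ A : Fin 3 → Finset (Fin 11), IsPartition A →
      (∀ i, exCost i (A i) ≤ τ i) → 3 ≤ exCost 0 (A 0)) := by
  refine ⟨fun i => ?_, fun A hA hL hM => ?_, fun A hA hL => ?_, fun A hA hL => ?_,
    fun A hA hM => three_le_card_of_mmsFair hτ hA hM⟩
  · rw [exCost_eq]
    exact ⟨binaryMarginals_card_sub _, supermod_card_sub _, by simp⟩
  · have := three_le_card_of_mmsFair hτ hA hM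
    rcases card_of_lorenzDominating hA hL with ⟨h, -⟩ | ⟨h, -⟩ | ⟨h, -⟩ <;> omega
  · rcases card_of_lorenzDominating hA hL with ⟨h0, h1, -⟩ | ⟨h0, h1, -⟩ | ⟨h0, -, h2⟩
    · exact not_ef1_of_card (by decide) (by omega) h1
    · exact not_ef1_of_card (by decide) (by omega) h1
    · exact not_ef1_of_card (by decide) (by omega) h2
  · change ({exCost 0 (A 0), exCost 1 (A 1), exCost 2 (A 2)} : Multiset ℕ) = _
    rcases card_of_lorenzDominating hA hL with ⟨h0, h1, h2⟩ | ⟨h0, h1, h2⟩ | ⟨h0, h1, h2⟩ <;>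
      simp [exCost, h0, h1, h2] <;> decide
end

section
/- For n agents with identical monotone cost function c (c(∅)=0), an EFX complete allocation of the chores always exists. In particular, the Add-and-Fix procedure—repeatedly adding an unassigned chore to a minimum-cost agent's bundle and removing chores from that bundle while some removal leaves its cost above the second-minimum cost—maintains the EFX property and terminates with a complete EFX allocation. -/
/-!
Among the partial allocations that are pairwise disjoint and EFX (the empty one is such), take
one maximising the potential (total cost, number of assigned chores) lexicographically. If a
chore `e` were unassigned, give it to an agent `i` of minimum cost. If the new bundle
`S = A i ∪ {e}` is EFX towards every other agent, the total cost does not drop and one more chore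
is assigned. Otherwise `S` costs more than the second-minimum cost `x`, and a minimal `B ⊆ S` with
`x < c B` satisfies `c (B \ {t}) ≤ x` for all `t ∈ B`; giving `B` to `i` keeps the allocation EFX
and strictly raises the total cost. Either way the potential increases: a contradiction.
-/

open Finset Function

theorem Fintype.sum_comp_update_add {ι κ M : Type*} [Fintype ι] [DecidableEq ι]
    [AddCommMonoid M] (f : κ → M) (A : ι → κ) (i : ι) (b : κ) :
    ∑ j, f (update A i b j) + f (A i) = ∑ j, f (A j) + f b := by
  have hrest : ∑ j ∈ univ.erase i, f (update A i b j) = ∑ j ∈ univ.erase i, f (A j) :=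
    Finset.sum_congr rfl fun j hj => by rw [update_of_ne (ne_of_mem_erase hj)]
  rw [← add_sum_erase univ (fun j => f (update A i b j)) (mem_univ i),
    ← add_sum_erase univ (fun j => f (A j)) (mem_univ i), update_self, hrest]
  abel

theorem Pairwise.disjoint_update {ι α : Type*} [DecidableEq ι] [DecidableEq α]
    {A : ι → Finset α} (hA : Pairwise (Disjoint on A)) {i : ι} {e : α} (he : ∀ j, e ∉ A j)
    {B : Finset α} (hB : B ⊆ insert e (A i)) : Pairwise (Disjoint on update A i B) := by
  have hBj : ∀ j ≠ i, Disjoint B (A j) := fun j hj =>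
    (disjoint_insert_left.2 ⟨he j, hA hj.symm⟩).mono_left hB
  intro p q hpq
  rcases eq_or_ne p i with rfl | hp
  · simpa only [onFun, update_self, update_of_ne hpq.symm] using hBj q hpq.symm
  · rcases eq_or_ne q i with rfl | hq
    · simpa only [onFun, update_self, update_of_ne hp] using (hBj p hp).symm
    · simpa only [onFun, update_of_ne hp, update_of_ne hq] using hA hpq

namespace ChoreAllocation

variable {ι α β : Type*}

section Potential

variable [Fintype ι] [AddCommMonoid β] [LinearOrder β] [IsOrderedCancelAddMonoid β]

def potential (c : Finset α → β) (A : ι → Finset α) : β ×ₗ ℕ :=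
  toLex (∑ j, c (A j), ∑ j, #(A j))

theorem potential_lt_update [DecidableEq ι] {c : Finset α → β} {A : ι → Finset α} {i : ι}
    {B : Finset α} (hle : c (A i) ≤ c B) (hlt : c (A i) < c B ∨ #(A i) < #B) :
    potential c A < potential c (update A i B) := by
  have hcost := Fintype.sum_comp_update_add c A i B
  have hcard := Fintype.sum_comp_update_add card A i B
  rw [potential, potential, Prod.Lex.toLex_lt_toLex]
  rcases hle.lt_or_eq with hlt' | heq
  · left
    refine lt_of_add_lt_add_right (a := c (A i)) ?_
    rw [hcost]
    gcongr
  · right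
    refine ⟨(add_right_cancel (hcost.trans (congrArg _ heq.symm))).symm, ?_⟩
    rcases hlt with h | h
    · exact absurd heq h.ne
    · omega

end Potential

variable [DecidableEq α]

theorem exists_subset_lt_forall_erase_le [LinearOrder β] (c : Finset α → β) {S : Finset α}
    {x : β} (h : x < c S) : ∃ B ⊆ S, x < c B ∧ ∀ t ∈ B, c (B.erase t) ≤ x := by
  induction S using Finset.strongInduction with
  | H S ih =>
    by_cases hS : ∃ t ∈ S, x < c (S.erase t)
    · obtain ⟨t, ht, hlt⟩ := hS
      obtain ⟨B, hBS, hB⟩ := ih _ (erase_ssubset ht) hlt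
      exact ⟨B, hBS.trans (erase_subset t S), hB⟩
    · push Not at hS
      exact ⟨S, subset_rfl, h, hS⟩

def IsEFX [LE β] (c : Finset α → β) (A : ι → Finset α) : Prop :=
  ∀ i j, A i ≠ ∅ → ∀ t ∈ A i, c ((A i).erase t) ≤ c (A j)

theorem isEFX_empty [LE β] (c : Finset α → β) : IsEFX c (fun _ : ι => ∅) :=
  fun _ _ h => absurd rfl h

theorem IsEFX.update [DecidableEq ι] [Preorder β] {c : Finset α → β} (hc : Monotone c)
    {A : ι → Finset α} (hA : IsEFX c A) {i : ι} {B : Finset α} (hle : c (A i) ≤ c B)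
    (hB : ∀ j ≠ i, ∀ t ∈ B, c (B.erase t) ≤ c (A j)) : IsEFX c (update A i B) := by
  intro p q _ t ht
  rcases eq_or_ne p i with rfl | hp
  · rw [update_self] at ht ⊢
    rcases eq_or_ne q p with rfl | hq
    · rw [update_self]
      exact hc (erase_subset t B)
    · rw [update_of_ne hq]
      exact hB q hq t ht
  · rw [update_of_ne hp] at ht ⊢
    rcases eq_or_ne q i with rfl | hq
    · rw [update_self]
      exact (hA p q (ne_empty_of_mem ht) t ht).trans hle
    · rw [update_of_ne hq]
      exact hA p q (ne_empty_of_mem ht) t ht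

theorem exists_efx_bundle_subset_insert [Finite ι] [LinearOrder β] {c : Finset α → β}
    (hc : Monotone c) {A : ι → Finset α} {i : ι} (hi : ∀ j, c (A i) ≤ c (A j)) {e : α}
    (he : e ∉ A i) :
    ∃ B ⊆ insert e (A i), c (A i) ≤ c B ∧ (c (A i) < c B ∨ #(A i) < #B) ∧
      ∀ j ≠ i, ∀ t ∈ B, c (B.erase t) ≤ c (A j) := by
  set S := insert e (A i)
  by_cases hS : ∃ j ≠ i, ∃ t ∈ S, c (A j) < c (S.erase t)
  · obtain ⟨j, hj, t, -, hjt⟩ := hS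
    obtain ⟨k, -, hkmin⟩ :=
      Set.exists_min_image {j | j ≠ i} (fun j => c (A j)) (Set.toFinite _) ⟨j, hj⟩
    have hkS : c (A k) < c S := (hkmin j hj).trans_lt (hjt.trans_le (hc (erase_subset t S)))
    obtain ⟨B, hBS, hkB, hB⟩ := exists_subset_lt_forall_erase_le c hkS
    have hiB : c (A i) < c B := (hi k).trans_lt hkB
    exact ⟨B, hBS, hiB.le, .inl hiB, fun j hj t ht => (hB t ht).trans (hkmin j hj)⟩
  · push Not at hS
    refine ⟨S, subset_rfl, hc (subset_insert e (A i)), .inr ?_, hS⟩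
    simp [S, card_insert_of_notMem he]

theorem exists_efx_allocation [Fintype ι] [DecidableEq ι] [Nonempty ι] [Finite α]
    [AddCommMonoid β] [LinearOrder β] [IsOrderedCancelAddMonoid β] {c : Finset α → β}
    (hc : Monotone c) :
    ∃ A : ι → Finset α, Pairwise (Disjoint on A) ∧ (∀ e, ∃ j, e ∈ A j) ∧ IsEFX c A := by
  obtain ⟨A, ⟨hdisj, hefx⟩, hmax⟩ := Set.exists_max_image
    {A : ι → Finset α | Pairwise (Disjoint on A) ∧ IsEFX c A} (potential c) (Set.toFinite _)
    ⟨fun _ => ∅, fun _ _ _ => disjoint_bot_left, isEFX_empty c⟩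
  refine ⟨A, hdisj, fun e => ?_, hefx⟩
  by_contra! he
  obtain ⟨i, hi⟩ := Finite.exists_min (fun j => c (A j))
  obtain ⟨B, hBS, hle, hlt, hB⟩ := exists_efx_bundle_subset_insert hc hi (he i)
  exact (hmax _ ⟨hdisj.disjoint_update he hBS, hefx.update hc hle hB⟩).not_gt
    (potential_lt_update hle hlt)

end ChoreAllocation

theorem exists_efx_allocation_identical_monotone_general (n m : ℕ) (hn : 1 ≤ n)
    (c : Finset (Fin m) → ℝ)
    (hmono : ∀ S T : Finset (Fin m), S ⊆ T → c S ≤ c T) :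
    ∃ A : Fin n → Finset (Fin m), IsPartition A ∧
      ∀ i j : Fin n, A i ≠ ∅ → ∀ t ∈ A i, c ((A i).erase t) ≤ c (A j) := by
  have : Nonempty (Fin n) := ⟨⟨0, hn⟩⟩
  obtain ⟨A, hdisj, hcover, hefx⟩ := ChoreAllocation.exists_efx_allocation (ι := Fin n) hmono
  refine ⟨A, ⟨fun i j => @hdisj i j, eq_univ_of_forall fun e => ?_⟩, hefx⟩
  obtain ⟨j, hj⟩ := hcover e
  exact mem_biUnion.2 ⟨j, mem_univ j, hj⟩

/-- for `n` agents with an identical monotone cost function `c`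
(with `c ∅ = 0`), an EFX complete allocation of the chores always exists:
for every pair of agents `i, j` with `A i ≠ ∅` and every chore `t ∈ A i`,
`c (A i \ {t}) ≤ c (A j)`. -/
theorem exists_efx_allocation_identical_monotone (n m : ℕ) (hn : 1 ≤ n)
    (c : Finset (Fin m) → ℝ)
    (hnn : ∀ S, 0 ≤ c S)
    (hmono : ∀ S T : Finset (Fin m), S ⊆ T → c S ≤ c T)
    (h0 : c ∅ = 0) :
    ∃ A : Fin n → Finset (Fin m), IsPartition A ∧
      ∀ i j : Fin n, A i ≠ ∅ → ∀ t ∈ A i, c ((A i).erase t) ≤ c (A j) :=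
  exists_efx_allocation_identical_monotone_general n m hn c hmono
end
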